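/- arXiv:2307.07666 — 3 statements merged into one kernel-verified Lean document; each statement's English description precedes it below -/
import Mathlib

section
/- Let P and P̂ be probability distributions on a finite set S, and let V, W, U : S → ℝ satisfy 0 ≤ W(s) ≤ U(s) ≤ V(s) ≤ H for all s and some H ≥ 0. Then |Var_{P̂}((V+W)/2) - Var_P(U)| ≤ H²·‖P̂ - P‖₁ + 2H·‖P̂ - P‖₁·H + 2H·E_P[V - W] + 2H·|E_P[V] - E_P[W]|, where Var_Q(f) = E_Q[f²] - (E_Q[f])². In particular, Var_{P̂}((V+W)/2) - Var_P(U) ≤ |E_{P̂}[V²] - E_P[V²]| + |(E_P[W])² - (E_{P̂}[W])²| + E_P[V² - W²] + (E_P[V])² - (E_P[W])². -/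
open Finset

theorem stmt_5 {S : Type*} [Fintype S] [Nonempty S] (P Phat : S → ℝ) (V W U : S → ℝ)
    (H : ℝ) (hH : 0 ≤ H)
    (hP0 : ∀ s, 0 ≤ P s) (hP1 : ∑ s, P s = 1)
    (hPhat0 : ∀ s, 0 ≤ Phat s) (hPhat1 : ∑ s, Phat s = 1)
    (hW0 : ∀ s, 0 ≤ W s) (hWU : ∀ s, W s ≤ U s) (hUV : ∀ s, U s ≤ V s)
    (hVH : ∀ s, V s ≤ H) :
    |((∑ s, Phat s * ((V s + W s) / 2) ^ 2) - (∑ s, Phat s * ((V s + W s) / 2)) ^ 2)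
        - ((∑ s, P s * U s ^ 2) - (∑ s, P s * U s) ^ 2)|
      ≤ H ^ 2 * (∑ s, |Phat s - P s|) + 2 * H * (∑ s, |Phat s - P s|) * H
        + 2 * H * (∑ s, P s * (V s - W s)) + 2 * H * |(∑ s, P s * V s) - (∑ s, P s * W s)| ∧
    ((∑ s, Phat s * ((V s + W s) / 2) ^ 2) - (∑ s, Phat s * ((V s + W s) / 2)) ^ 2)
        - ((∑ s, P s * U s ^ 2) - (∑ s, P s * U s) ^ 2)
      ≤ |(∑ s, Phat s * V s ^ 2) - (∑ s, P s * V s ^ 2)|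
        + |(∑ s, P s * W s) ^ 2 - (∑ s, Phat s * W s) ^ 2|
        + (∑ s, P s * (V s ^ 2 - W s ^ 2))
        + ((∑ s, P s * V s) ^ 2 - (∑ s, P s * W s) ^ 2) := by
  have hU0 : ∀ s, 0 ≤ U s := fun s => (hW0 s).trans (hWU s)
  have hUH : ∀ s, U s ≤ H := fun s => (hUV s).trans (hVH s)
  have hWH : ∀ s, W s ≤ H := fun s => (hWU s).trans (hUH s)
  have hV0 : ∀ s, 0 ≤ V s := fun s => (hU0 s).trans (hUV s)
  set m : S → ℝ := fun s => (V s + W s) / 2 with hm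
  have hWm : ∀ s, W s ≤ m s := fun s => by simp only [hm]; linarith [hWU s, hUV s]
  have hmV : ∀ s, m s ≤ V s := fun s => by simp only [hm]; linarith [hWU s, hUV s]
  have hm0 : ∀ s, 0 ≤ m s := fun s => (hW0 s).trans (hWm s)
  have hmH : ∀ s, m s ≤ H := fun s => (hmV s).trans (hVH s)
  have key : ∀ (f : S → ℝ) (B : ℝ), (∀ s, |f s| ≤ B) →
      |(∑ s, Phat s * f s) - ∑ s, P s * f s| ≤ B * ∑ s, |Phat s - P s| := by
    intro f B hf
    have h1 : (∑ s, Phat s * f s) - ∑ s, P s * f s = ∑ s, (Phat s - P s) * f s := by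
      rw [← Finset.sum_sub_distrib]; exact Finset.sum_congr rfl (fun s _ => by ring)
    rw [h1]
    calc |∑ s, (Phat s - P s) * f s| ≤ ∑ s, |(Phat s - P s) * f s| :=
          Finset.abs_sum_le_sum_abs _ _
      _ ≤ ∑ s, |Phat s - P s| * B := Finset.sum_le_sum (fun s _ => by
          rw [abs_mul]; exact mul_le_mul_of_nonneg_left (hf s) (abs_nonneg _))
      _ = B * ∑ s, |Phat s - P s| := by
          rw [Finset.mul_sum]; exact Finset.sum_congr rfl (fun s _ => mul_comm _ _)
  have mono : ∀ (Q : S → ℝ), (∀ s, 0 ≤ Q s) → ∀ f g : S → ℝ, (∀ s, f s ≤ g s) →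
      ∑ s, Q s * f s ≤ ∑ s, Q s * g s := fun Q hQ f g h =>
    Finset.sum_le_sum (fun s _ => mul_le_mul_of_nonneg_left (h s) (hQ s))
  have rangeE : ∀ (Q : S → ℝ), (∀ s, 0 ≤ Q s) → (∑ s, Q s = 1) → ∀ f : S → ℝ,
      (∀ s, 0 ≤ f s) → (∀ s, f s ≤ H) → 0 ≤ (∑ s, Q s * f s) ∧ (∑ s, Q s * f s) ≤ H := by
    intro Q hQ hQ1 f h0 h1
    constructor
    · exact Finset.sum_nonneg (fun s _ => mul_nonneg (hQ s) (h0 s))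
    · calc ∑ s, Q s * f s ≤ ∑ s, Q s * H := mono Q hQ _ _ h1
        _ = H := by rw [← Finset.sum_mul, hQ1, one_mul]
  have hD0 : 0 ≤ ∑ s, |Phat s - P s| := Finset.sum_nonneg (fun s _ => abs_nonneg _)
  set D := ∑ s, |Phat s - P s| with hDdef
  obtain ⟨hx0, hxH⟩ := rangeE Phat hPhat0 hPhat1 m hm0 hmH
  obtain ⟨hz0, hzH⟩ := rangeE P hP0 hP1 m hm0 hmH
  obtain ⟨hy0, hyH⟩ := rangeE P hP0 hP1 U hU0 hUH
  obtain ⟨hv0, hvH⟩ := rangeE P hP0 hP1 V hV0 hVH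
  obtain ⟨hw0, hwH⟩ := rangeE P hP0 hP1 W hW0 hWH
  obtain ⟨hhw0, hhwH⟩ := rangeE Phat hPhat0 hPhat1 W hW0 hWH
  have hA1 : |(∑ s, Phat s * m s ^ 2) - ∑ s, P s * m s ^ 2| ≤ H ^ 2 * D := by
    apply key
    intro s
    rw [abs_of_nonneg (sq_nonneg _)]
    nlinarith [hm0 s, hmH s]
  have hA2 : |(∑ s, Phat s * m s) - ∑ s, P s * m s| ≤ H * D := by
    apply key
    intro s
    rw [abs_of_nonneg (hm0 s)]
    exact hmH s
  have hE0 : 0 ≤ ∑ s, P s * (V s - W s) :=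
    Finset.sum_nonneg (fun s _ => mul_nonneg (hP0 s) (by linarith [hWU s, hUV s]))
  set E := ∑ s, P s * (V s - W s) with hEdef
  have hEeq : (∑ s, P s * V s) - ∑ s, P s * W s = E := by
    rw [hEdef, ← Finset.sum_sub_distrib]; exact Finset.sum_congr rfl (fun s _ => by ring)
  have hA3 : |(∑ s, P s * m s ^ 2) - ∑ s, P s * U s ^ 2| ≤ 2 * H * E := by
    have h1 : (∑ s, P s * m s ^ 2) - ∑ s, P s * U s ^ 2 = ∑ s, P s * (m s ^ 2 - U s ^ 2) := by
      rw [← Finset.sum_sub_distrib]; exact Finset.sum_congr rfl (fun s _ => by ring)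
    rw [h1, hEdef, Finset.mul_sum]
    calc |∑ s, P s * (m s ^ 2 - U s ^ 2)| ≤ ∑ s, |P s * (m s ^ 2 - U s ^ 2)| :=
          Finset.abs_sum_le_sum_abs _ _
      _ ≤ ∑ s, 2 * H * (P s * (V s - W s)) := Finset.sum_le_sum (fun s _ => by
          rw [abs_mul, abs_of_nonneg (hP0 s)]
          have habs : |m s ^ 2 - U s ^ 2| ≤ 2 * H * (V s - W s) := by
            rw [abs_le]
            constructor <;>
              nlinarith [hm0 s, hmH s, hU0 s, hUH s, hWm s, hmV s, hWU s, hUV s]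
          calc P s * |m s ^ 2 - U s ^ 2| ≤ P s * (2 * H * (V s - W s)) :=
                mul_le_mul_of_nonneg_left habs (hP0 s)
            _ = 2 * H * (P s * (V s - W s)) := by ring)
  have hA4 : |(∑ s, P s * m s) - ∑ s, P s * U s| ≤ E := by
    have h1 : (∑ s, P s * m s) - ∑ s, P s * U s = ∑ s, P s * (m s - U s) := by
      rw [← Finset.sum_sub_distrib]; exact Finset.sum_congr rfl (fun s _ => by ring)
    rw [h1, hEdef]
    calc |∑ s, P s * (m s - U s)| ≤ ∑ s, |P s * (m s - U s)| := Finset.abs_sum_le_sum_abs _ _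
      _ ≤ ∑ s, P s * (V s - W s) := Finset.sum_le_sum (fun s _ => by
          rw [abs_mul, abs_of_nonneg (hP0 s)]
          apply mul_le_mul_of_nonneg_left _ (hP0 s)
          rw [abs_le]
          constructor <;> linarith [hWm s, hmV s, hWU s, hUV s])
  constructor
  · rw [hEeq, abs_of_nonneg hE0]
    have hb1 : |(∑ s, Phat s * m s) ^ 2 - (∑ s, P s * m s) ^ 2| ≤ (H * D) * (2 * H) := by
      have he : (∑ s, Phat s * m s) ^ 2 - (∑ s, P s * m s) ^ 2
          = ((∑ s, Phat s * m s) - (∑ s, P s * m s))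
            * ((∑ s, Phat s * m s) + (∑ s, P s * m s)) := by ring
      rw [he, abs_mul]
      have h2 : |(∑ s, Phat s * m s) + (∑ s, P s * m s)| ≤ 2 * H :=
        abs_le.mpr ⟨by linarith, by linarith⟩
      exact mul_le_mul hA2 h2 (abs_nonneg _) (mul_nonneg hH hD0)
    have hb2 : |(∑ s, P s * m s) ^ 2 - (∑ s, P s * U s) ^ 2| ≤ E * (2 * H) := by
      have he : (∑ s, P s * m s) ^ 2 - (∑ s, P s * U s) ^ 2
          = ((∑ s, P s * m s) - (∑ s, P s * U s))
            * ((∑ s, P s * m s) + (∑ s, P s * U s)) := by ring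
      rw [he, abs_mul]
      have h2 : |(∑ s, P s * m s) + (∑ s, P s * U s)| ≤ 2 * H :=
        abs_le.mpr ⟨by linarith, by linarith⟩
      exact mul_le_mul hA4 h2 (abs_nonneg _) hE0
    rw [abs_le]
    obtain ⟨h1a, h1b⟩ := abs_le.mp hA1
    obtain ⟨h3a, h3b⟩ := abs_le.mp hA3
    obtain ⟨hb1a, hb1b⟩ := abs_le.mp hb1
    obtain ⟨hb2a, hb2b⟩ := abs_le.mp hb2
    constructor <;> (intros; linarith)
  · have hMV2 : (∑ s, Phat s * m s ^ 2) ≤ ∑ s, Phat s * V s ^ 2 :=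
      mono Phat hPhat0 _ _ (fun s => pow_le_pow_left₀ (hm0 s) (hmV s) 2)
    have hWM : (∑ s, Phat s * W s) ≤ ∑ s, Phat s * m s := mono Phat hPhat0 _ _ hWm
    have hWU2 : (∑ s, P s * W s ^ 2) ≤ ∑ s, P s * U s ^ 2 :=
      mono P hP0 _ _ (fun s => pow_le_pow_left₀ (hW0 s) (hWU s) 2)
    have hUVs : (∑ s, P s * U s) ≤ ∑ s, P s * V s := mono P hP0 _ _ hUV
    have hVW2eq : (∑ s, P s * (V s ^ 2 - W s ^ 2))
        = (∑ s, P s * V s ^ 2) - ∑ s, P s * W s ^ 2 := by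
      rw [← Finset.sum_sub_distrib]; exact Finset.sum_congr rfl (fun s _ => by ring)
    have h6 := le_abs_self ((∑ s, Phat s * V s ^ 2) - ∑ s, P s * V s ^ 2)
    have h7 := le_abs_self ((∑ s, P s * W s) ^ 2 - (∑ s, Phat s * W s) ^ 2)
    have hsq1 : (∑ s, Phat s * W s) ^ 2 ≤ (∑ s, Phat s * m s) ^ 2 :=
      pow_le_pow_left₀ hhw0 hWM 2
    have hsq2 : (∑ s, P s * U s) ^ 2 ≤ (∑ s, P s * V s) ^ 2 :=
      pow_le_pow_left₀ hy0 hUVs 2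
    rw [hVW2eq]
    linarith [hMV2, hWU2]
end

section
/- With α_t = (H+1)/(H+t) and α_t^i = α_i·∏_{j=i+1}^t (1-α_j), for every t ≥ 1 it holds that ∑_{i=1}^t (α_t^i)² ≤ 2H/t. -/
open Finset

noncomputable def alphaStep (H t : ℕ) : ℝ := (H + 1) / (H + t)

noncomputable def alphaWeight (H i t : ℕ) : ℝ :=
  alphaStep H i * ∏ j ∈ Finset.Icc (i + 1) t, (1 - alphaStep H j)

lemma step_nonneg (H t : ℕ) : 0 ≤ alphaStep H t := by
  unfold alphaStep; positivity

lemma step_le_one (H j : ℕ) (hj : 1 ≤ j) : alphaStep H j ≤ 1 := by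
  unfold alphaStep
  rw [div_le_one (by positivity)]
  have : (1:ℝ) ≤ (j:ℝ) := by exact_mod_cast hj
  linarith

lemma weight_nonneg (H i t : ℕ) : 0 ≤ alphaWeight H i t := by
  unfold alphaWeight
  apply mul_nonneg (step_nonneg H i)
  apply Finset.prod_nonneg
  intro j hj
  simp only [Finset.mem_Icc] at hj
  have : alphaStep H j ≤ 1 := step_le_one H j (by omega)
  linarith

lemma weight_le_step (H i t : ℕ) (hH : 1 ≤ H) (hi : 1 ≤ i) (hit : i ≤ t) :
    alphaWeight H i t ≤ alphaStep H t := by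
  induction t, hit using Nat.le_induction with
  | base =>
      unfold alphaWeight
      rw [Finset.Icc_eq_empty (by omega), Finset.prod_empty, mul_one]
  | succ t hit ih =>
      unfold alphaWeight at ih ⊢
      rw [Finset.prod_Icc_succ_top (by omega), ← mul_assoc]
      have h1 : 1 - alphaStep H (t + 1) ≥ 0 := by
        have := step_le_one H (t+1) (by omega); linarith
      have h2 : alphaStep H i * ∏ j ∈ Finset.Icc (i + 1) t, (1 - alphaStep H j) ≥ 0 := by
        have := weight_nonneg H i t; unfold alphaWeight at this; exact this
      calc alphaStep H i * (∏ j ∈ Finset.Icc (i + 1) t, (1 - alphaStep H j)) *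
            (1 - alphaStep H (t+1))
          ≤ alphaStep H t * (1 - alphaStep H (t+1)) := by
            exact mul_le_mul_of_nonneg_right ih h1
        _ ≤ alphaStep H (t+1) := by
            unfold alphaStep
            have hH1 : (1:ℝ) ≤ (H:ℝ) := by exact_mod_cast hH
            have ht0 : (0:ℝ) ≤ (t:ℝ) := Nat.cast_nonneg t
            push_cast
            have key : 1 - ((H:ℝ)+1)/((H:ℝ)+(t+1)) = (t:ℝ)/((H:ℝ)+(t+1)) := by
              field_simp
              ring
            rw [key, div_mul_div_comm, div_le_div_iff₀ (by nlinarith) (by linarith)]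
            nlinarith [mul_nonneg (mul_nonneg (by linarith : (0:ℝ) ≤ (H:ℝ)+1)
              (by linarith : (0:ℝ) ≤ (H:ℝ)+(t+1))) (by linarith : (0:ℝ) ≤ (H:ℝ))]

lemma sum_weights (H t : ℕ) (hH : 1 ≤ H) (ht : 1 ≤ t) :
    ∑ i ∈ Finset.Icc 1 t, alphaWeight H i t = 1 := by
  induction t, ht using Nat.le_induction with
  | base =>
      rw [Finset.Icc_self, Finset.sum_singleton]
      unfold alphaWeight alphaStep
      rw [Finset.Icc_eq_empty (by omega), Finset.prod_empty, mul_one]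
      have h : ((H:ℝ)+1) ≠ 0 := by positivity
      push_cast
      field_simp
  | succ t ht ih =>
      rw [show t + 1 = t + 1 from rfl, Finset.sum_Icc_succ_top (by omega)]
      have hsplit : ∀ i ∈ Finset.Icc 1 t, alphaWeight H i (t+1)
          = alphaWeight H i t * (1 - alphaStep H (t+1)) := by
        intro i hi
        simp only [Finset.mem_Icc] at hi
        unfold alphaWeight
        rw [Finset.prod_Icc_succ_top (by omega)]
        ring
      rw [Finset.sum_congr rfl hsplit, ← Finset.sum_mul, ih]
      unfold alphaWeight
      rw [Finset.Icc_eq_empty (by omega), Finset.prod_empty, mul_one]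
      ring

theorem stmt_11 (H t : ℕ) (hH : 1 ≤ H) (ht : 1 ≤ t) :
    ∑ i ∈ Finset.Icc 1 t, (alphaWeight H i t) ^ 2 ≤ 2 * H / t := by
  have step1 : ∑ i ∈ Finset.Icc 1 t, (alphaWeight H i t) ^ 2
      ≤ ∑ i ∈ Finset.Icc 1 t, alphaStep H t * alphaWeight H i t := by
    apply Finset.sum_le_sum
    intro i hi
    simp only [Finset.mem_Icc] at hi
    have h1 := weight_le_step H i t hH hi.1 hi.2
    have h2 := weight_nonneg H i t
    nlinarith
  rw [← Finset.mul_sum, sum_weights H t hH ht, mul_one] at step1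
  apply step1.trans
  unfold alphaStep
  have ht1 : (1:ℝ) ≤ (t:ℝ) := by exact_mod_cast ht
  have hH1 : (1:ℝ) ≤ (H:ℝ) := by exact_mod_cast hH
  rw [div_le_div_iff₀ (by linarith) (by linarith)]
  nlinarith
end

section
/- With α_t = (H+1)/(H+t) and α_t^i = α_i·∏_{j=i+1}^t (1-α_j), for every i ≥ 1 it holds that ∑_{t=i}^∞ α_t^i ≤ 1 + 1/H. -/
open Finset

noncomputable def gAux (H i t : ℕ) : ℝ :=
  ((H + 1) * t) / (H * (H + i)) * ∏ j ∈ Finset.Icc (i + 1) t, (1 - alphaStep H j)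

lemma oneSub_nonneg (H j : ℕ) (hj : 1 ≤ j) : 0 ≤ 1 - alphaStep H j := by
  have hj' : (1 : ℝ) ≤ (j : ℝ) := by exact_mod_cast hj
  have hpos : (0 : ℝ) < (H : ℝ) + j := by positivity
  have : alphaStep H j ≤ 1 := by
    rw [alphaStep, div_le_one hpos]
    linarith
  linarith

lemma prod_nonneg' (H i t : ℕ) (hi : 1 ≤ i) :
    0 ≤ ∏ j ∈ Finset.Icc (i + 1) t, (1 - alphaStep H j) := by
  apply Finset.prod_nonneg
  intro j hj
  exact oneSub_nonneg H j (by have := (Finset.mem_Icc.mp hj).1; omega)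

lemma alphaWeight_nonneg (H i t : ℕ) (hi : 1 ≤ i) : 0 ≤ alphaWeight H i t := by
  unfold alphaWeight alphaStep
  have := prod_nonneg' H i t hi
  have h1 : (0:ℝ) ≤ (H + 1) / (H + i) := by positivity
  unfold alphaStep at this
  exact mul_nonneg h1 this

lemma gAux_nonneg (H i t : ℕ) (hi : 1 ≤ i) : 0 ≤ gAux H i t := by
  unfold gAux
  have := prod_nonneg' H i t hi
  have h1 : (0:ℝ) ≤ ((H:ℝ) + 1) * t / (H * (H + i)) := by positivity
  exact mul_nonneg h1 this

lemma tele (H i s : ℕ) (hH : 1 ≤ H) (hs : i ≤ s) :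
    alphaWeight H i (s + 1) = gAux H i s - gAux H i (s + 1) := by
  have hHpos : (0:ℝ) < (H:ℝ) := by exact_mod_cast hH
  have hHi : (0:ℝ) < (H:ℝ) + i := by positivity
  have hHs : (0:ℝ) < (H:ℝ) + (s+1:ℕ) := by positivity
  have hprod : ∏ j ∈ Finset.Icc (i + 1) (s + 1), (1 - alphaStep H j)
      = (∏ j ∈ Finset.Icc (i + 1) s, (1 - alphaStep H j)) * (1 - alphaStep H (s+1)) := by
    rw [Finset.prod_Icc_succ_top (by omega)]
  unfold alphaWeight gAux
  rw [hprod]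
  have hcast : ((s+1:ℕ) : ℝ) = (s:ℝ) + 1 := by push_cast; ring
  unfold alphaStep
  rw [hcast] at hHs ⊢
  field_simp
  ring

lemma partial_sum (H i : ℕ) (hH : 1 ≤ H) (hi : 1 ≤ i) :
    ∀ N, i ≤ N → ∑ t ∈ Finset.Icc i N, alphaWeight H i t
      = ((H:ℝ) + 1) / H - gAux H i N := by
  intro N hN
  induction N with
  | zero => omega
  | succ n ih =>
    rcases Nat.lt_or_ge i (n+1) with h | h
    · have hin : i ≤ n := by omega
      rw [Finset.sum_Icc_succ_top (by omega), ih hin, tele H i n hH hin]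
      ring
    · have : i = n + 1 := by omega
      subst this
      simp only [Finset.Icc_self, Finset.sum_singleton]
      unfold alphaWeight gAux alphaStep
      rw [Finset.Icc_eq_empty (by omega), Finset.prod_empty]
      have hHpos : (0:ℝ) < (H:ℝ) := by exact_mod_cast hH
      have hHi : (0:ℝ) < (H:ℝ) + (n+1:ℕ) := by positivity
      field_simp
      ring

theorem stmt_12 (H i : ℕ) (hH : 1 ≤ H) (hi : 1 ≤ i) :
    ∑' t : ℕ, (if i ≤ t then alphaWeight H i t else 0) ≤ 1 + 1 / H := by
  have hHpos : (0:ℝ) < (H:ℝ) := by exact_mod_cast hH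
  have hbound : (1:ℝ) + 1 / H = ((H:ℝ) + 1) / H := by field_simp
  apply tsum_le_of_sum_le'
  · rw [hbound]; positivity
  · intro s
    set N := s.sup id + i with hNdef
    have hiN : i ≤ N := by omega
    have hsub : s ⊆ Finset.range (N + 1) := by
      intro x hx
      simp only [Finset.mem_range]
      have := Finset.le_sup (f := id) hx
      simp only [id] at this
      omega
    have h1 : ∑ t ∈ s, (if i ≤ t then alphaWeight H i t else 0)
        ≤ ∑ t ∈ Finset.range (N + 1), (if i ≤ t then alphaWeight H i t else 0) := by
      apply Finset.sum_le_sum_of_subset_of_nonneg hsub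
      intro t _ _
      split
      · exact alphaWeight_nonneg H i t hi
      · exact le_refl 0
    have h2 : ∑ t ∈ Finset.range (N + 1), (if i ≤ t then alphaWeight H i t else 0)
        = ∑ t ∈ Finset.Icc i N, alphaWeight H i t := by
      rw [Finset.sum_ite, Finset.sum_const_zero, add_zero]
      apply Finset.sum_congr
      · ext x
        simp only [Finset.mem_filter, Finset.mem_Icc, Finset.mem_range]
        omega
      · intros; rfl
    rw [hbound]
    calc ∑ t ∈ s, (if i ≤ t then alphaWeight H i t else 0)
        ≤ ∑ t ∈ Finset.Icc i N, alphaWeight H i t := by rw [← h2]; exact h1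
      _ = ((H:ℝ) + 1) / H - gAux H i N := partial_sum H i hH hi N hiN
      _ ≤ ((H:ℝ) + 1) / H := by have := gAux_nonneg H i N hi; linarith
end
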